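/- Fix a real number a with 2/3 < a < 1 and 0 < ε < 1, and consider bootstrap percolation on Q_n with infection threshold ⌈n^a⌉ where each vertex is initially infected independently with probability p = (1 − ε)·n^{a-1}. Then the probability that the initially infected set percolates tends to 0 as n → ∞. -/

import Mathlib

open Finset Filter
open scoped Classical

noncomputable section

/-- The infected set after `i` steps of `r`-neighbour bootstrap percolation on the graph `G`,
starting from the initial infected set `A0`:
`A_{i+1} = A_i ∪ {v : |N(v) ∩ A_i| ≥ r}`. -/
def bootSets {V : Type*} [Fintype V] [DecidableEq V] (G : SimpleGraph V) (r : ℕ)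
    (A0 : Finset V) : ℕ → Finset V
  | 0 => A0
  | i + 1 =>
      bootSets G r A0 i ∪
        Finset.univ.filter fun v => r ≤ (G.neighborFinset v ∩ bootSets G r A0 i).card

/-- `A0` percolates under the `r`-neighbour bootstrap process on `G`. -/
def percolates {V : Type*} [Fintype V] [DecidableEq V] (G : SimpleGraph V) (r : ℕ)
    (A0 : Finset V) : Prop :=
  ∃ i, bootSets G r A0 i = Finset.univ

/-- The probability that the initial infected set is exactly `A`, when every vertex is
infected independently with probability `p`. -/
def configProb {V : Type*} [Fintype V] [DecidableEq V] (p : ℝ) (A : Finset V) : ℝ :=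
  p ^ A.card * (1 - p) ^ (Fintype.card V - A.card)

/-- The probability of the event `E` about the initial infected set, when every vertex is
infected independently with probability `p`. -/
def probEvent {V : Type*} [Fintype V] [DecidableEq V] (p : ℝ) (E : Finset V → Prop) : ℝ :=
  ∑ A : Finset V, if E A then configProb p A else 0

/-- The generalized hypercube `Q_{k,n}`: vertices are `{0,1}^n`, two vertices being adjacent
iff their Hamming distance is between `1` and `k`.  The usual hypercube `Q_n` is
`cubeGraph n 1`. -/
def cubeGraph (n k : ℕ) : SimpleGraph (Fin n → Bool) where
  Adj x y := 1 ≤ hammingDist x y ∧ hammingDist x y ≤ k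
  symm := by
    constructor
    intro x y h
    try dsimp only at h ⊢
    rwa [hammingDist_comm]
  loopless := by
    constructor
    intro x h
    simp [hammingDist_self] at h

/-- The critical probability for `r`-neighbour bootstrap percolation on `Q_{k,n}` where every
vertex is initially infected independently with probability `p`:
the supremum of all `p ∈ (0,1)` for which percolation has probability at most `1/2`. -/
def critProb (n k r : ℕ) : ℝ :=
  sSup {p : ℝ | p ∈ Set.Ioo (0 : ℝ) 1 ∧
    probEvent p (fun A0 => percolates (cubeGraph n k) r A0) ≤ 1 / 2}

/-- The `Boot1(t)` process with base threshold `r`: at step `1` the threshold is `r - t`,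
afterwards it is `r`. -/
def boot1Sets {V : Type*} [Fintype V] [DecidableEq V] (G : SimpleGraph V) (r t : ℕ)
    (A0 : Finset V) : ℕ → Finset V
  | 0 => A0
  | 1 => A0 ∪ Finset.univ.filter fun v => r - t ≤ (G.neighborFinset v ∩ A0).card
  | i + 2 =>
      boot1Sets G r t A0 (i + 1) ∪
        Finset.univ.filter fun v =>
          r ≤ (G.neighborFinset v ∩ boot1Sets G r t A0 (i + 1)).card

/-- The `Boot2(t)` (= `Boot3(t)`) process with base threshold `r`: at step `1` the threshold
is `r - 2t`, at step `2` it is `r - t`, and afterwards it is `r`. -/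
def boot2Sets {V : Type*} [Fintype V] [DecidableEq V] (G : SimpleGraph V) (r t : ℕ)
    (A0 : Finset V) : ℕ → Finset V
  | 0 => A0
  | 1 => A0 ∪ Finset.univ.filter fun v => r - 2 * t ≤ (G.neighborFinset v ∩ A0).card
  | 2 =>
      boot2Sets G r t A0 1 ∪
        Finset.univ.filter fun v =>
          r - t ≤ (G.neighborFinset v ∩ boot2Sets G r t A0 1).card
  | i + 3 =>
      boot2Sets G r t A0 (i + 2) ∪
        Finset.univ.filter fun v =>
          r ≤ (G.neighborFinset v ∩ boot2Sets G r t A0 (i + 2)).card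

/-!
Put `t = ⌈√n⌉` and let `W` be the set of vertices with at least `r - t` initially infected
neighbours. If no vertex has `t` neighbours in `W`, then `A₀ ∪ W` is closed under the
`r`-neighbour rule, so percolation forces a fixed vertex `v₀` into `A₀ ∪ W`. Now `v₀ ∈ A₀` has
probability `p → 0`, and `v₀ ∈ W` has probability `e^{-Ω(n^a)}` by a Chernoff bound. A vertex `v`
with `t` neighbours in `W` gives `t` vertices of `N(v)` each having `r - t - 1` infected neighbours
other than `v`; since two vertices of `Q_n` have at most two common neighbours, a Chernoff bound
for this weighted count gives probability `e^{-Ω(t n^a)} = e^{-Ω(n^{a + 1/2})}`, which beats the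
`4^n` choices of `v` and of the `t`-set. All exponents are `-(L - ε) n^a + O(√n)` with
`L = -log (1 - ε) > ε`.
-/

open Real

section Probability

variable {V : Type*} [Fintype V] [DecidableEq V] {p : ℝ}

theorem configProb_nonneg (hp0 : 0 ≤ p) (hp1 : p ≤ 1) (A : Finset V) : 0 ≤ configProb p A :=
  mul_nonneg (pow_nonneg hp0 _) (pow_nonneg (sub_nonneg.2 hp1) _)

theorem sum_configProb_mul_prod (p : ℝ) (w : V → ℝ) :
    ∑ A : Finset V, configProb p A * ∏ x ∈ A, w x = ∏ x, (p * w x + (1 - p)) := by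
  rw [prod_add, ← powerset_univ]
  refine sum_congr rfl fun A _ => ?_
  rw [configProb, ← card_compl, ← compl_eq_univ_sdiff, prod_mul_distrib,
    prod_const, prod_const]
  ring

theorem probEvent_add_probEvent_not (p : ℝ) (E : Finset V → Prop) :
    probEvent p E + probEvent p (fun A => ¬E A) = 1 := by
  have h := sum_configProb_mul_prod (V := V) p fun _ => 1
  simp only [prod_const_one, mul_one, add_sub_cancel] at h
  rw [probEvent, probEvent, ← sum_add_distrib, ← h]
  refine sum_congr rfl fun A _ => ?_
  by_cases hA : E A <;> simp [hA]

theorem probEvent_notMem (p : ℝ) (v : V) : probEvent p (fun A => v ∉ A) = 1 - p := by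
  have h := sum_configProb_mul_prod p fun x => if x = v then 0 else 1
  have hfactor : ∀ x, p * (if x = v then 0 else 1) + (1 - p) = if x = v then 1 - p else 1 := by
    intro x; split_ifs <;> ring
  simp only [hfactor, prod_ite_eq', mem_univ, if_true] at h
  rw [← h, probEvent]
  refine sum_congr rfl fun A _ => ?_
  by_cases hA : v ∈ A <;> simp [hA]

theorem probEvent_mem (p : ℝ) (v : V) : probEvent p (fun A => v ∈ A) = p := by
  linarith [probEvent_add_probEvent_not p (fun A => v ∈ A), probEvent_notMem p v]

theorem probEvent_nonneg (hp0 : 0 ≤ p) (hp1 : p ≤ 1) (E : Finset V → Prop) : 0 ≤ probEvent p E :=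
  sum_nonneg fun A _ => by split_ifs <;> simp [configProb_nonneg hp0 hp1 A]

theorem probEvent_mono (hp0 : 0 ≤ p) (hp1 : p ≤ 1) {E F : Finset V → Prop} (h : ∀ A, E A → F A) :
    probEvent p E ≤ probEvent p F := by
  refine sum_le_sum fun A _ => ?_
  have := configProb_nonneg hp0 hp1 A
  by_cases hE : E A <;> by_cases hF : F A <;> simp_all

theorem probEvent_or_le (hp0 : 0 ≤ p) (hp1 : p ≤ 1) (E F : Finset V → Prop) :
    probEvent p (fun A => E A ∨ F A) ≤ probEvent p E + probEvent p F := by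
  rw [probEvent, probEvent, probEvent, ← sum_add_distrib]
  refine sum_le_sum fun A _ => ?_
  have := configProb_nonneg hp0 hp1 A
  by_cases hE : E A <;> by_cases hF : F A <;> simp_all

theorem probEvent_exists_le_sum (hp0 : 0 ≤ p) (hp1 : p ≤ 1) {ι : Type*} (s : Finset ι)
    (E : ι → Finset V → Prop) :
    probEvent p (fun A => ∃ i ∈ s, E i A) ≤ ∑ i ∈ s, probEvent p (E i) := by
  simp only [probEvent]
  rw [sum_comm]
  refine sum_le_sum fun A _ => ?_
  have hc := configProb_nonneg hp0 hp1 A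
  have hterm : ∀ i ∈ s, 0 ≤ if E i A then configProb p A else 0 := fun i _ => by
    split_ifs <;> simp [hc]
  split_ifs with hA
  · obtain ⟨i, hi, hEi⟩ := hA
    simpa [hEi] using single_le_sum hterm hi
  · exact sum_nonneg hterm

theorem probEvent_le_exp_of_le_sum (hp0 : 0 ≤ p) (hp1 : p ≤ 1) {θ : ℝ} (hθ : 0 ≤ θ)
    (c : V → ℝ) (k : ℝ) {E : Finset V → Prop} (hE : ∀ A, E A → k ≤ ∑ x ∈ A, c x) :
    probEvent p E ≤ exp (p * ∑ x, (exp (θ * c x) - 1) - θ * k) := by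
  calc probEvent p E
      ≤ ∑ A, configProb p A * (exp (-(θ * k)) * ∏ x ∈ A, exp (θ * c x)) := by
        refine sum_le_sum fun A _ => ?_
        have hc := configProb_nonneg hp0 hp1 A
        split_ifs with hA
        · have h1 : 1 ≤ exp (-(θ * k)) * ∏ x ∈ A, exp (θ * c x) := by
            rw [← exp_sum, ← exp_add, ← mul_sum]
            exact one_le_exp (by nlinarith [hE A hA])
          nlinarith
        · positivity
    _ = exp (-(θ * k)) * ∏ x, (p * exp (θ * c x) + (1 - p)) := by
        simp_rw [mul_left_comm _ (exp _)]
        rw [← mul_sum, sum_configProb_mul_prod]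
    _ ≤ exp (-(θ * k)) * ∏ x, exp (p * (exp (θ * c x) - 1)) := by
        gcongr with x
        linarith [add_one_le_exp (p * (exp (θ * c x) - 1))]
    _ = exp (p * ∑ x, (exp (θ * c x) - 1) - θ * k) := by
        rw [← exp_sum, ← exp_add, ← mul_sum]
        ring_nf

theorem probEvent_le_card_inter_le (hp0 : 0 ≤ p) (hp1 : p ≤ 1) {θ : ℝ} (hθ : 0 ≤ θ)
    (S : Finset V) (k : ℕ) :
    probEvent p (fun A => k ≤ #(S ∩ A)) ≤ exp (p * #S * (exp θ - 1) - θ * k) := by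
  have h := probEvent_le_exp_of_le_sum hp0 hp1 hθ (fun x => if x ∈ S then 1 else 0) k
    (E := fun A => k ≤ #(S ∩ A)) fun A hA => by
      rw [sum_boole, filter_mem_eq_inter, inter_comm]
      exact_mod_cast hA
  have hterm : ∀ x, exp (θ * if x ∈ S then 1 else 0) - 1 = if x ∈ S then exp θ - 1 else 0 := by
    intro x; split_ifs <;> simp
  simp only [hterm, sum_ite_mem, univ_inter, sum_const, nsmul_eq_mul] at h
  convert h using 3
  ring

end Probability

theorem exp_mul_sub_one_le {s : ℝ} (hs0 : 0 ≤ s) (hs1 : s ≤ 1) (θ : ℝ) :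
    exp (s * θ) - 1 ≤ s * (exp θ - 1) := by
  have h := convexOn_exp.2 (Set.mem_univ 0) (Set.mem_univ θ) (sub_nonneg.2 hs1) hs0
    (sub_add_cancel 1 s)
  simp only [smul_eq_mul, mul_zero, zero_add, exp_zero, mul_one] at h
  linarith

section Bootstrap

variable {V : Type*} [Fintype V] [DecidableEq V] (G : SimpleGraph V)

def atLeastNeighbors (k : ℕ) (A : Finset V) : Finset V :=
  univ.filter fun u => k ≤ #(G.neighborFinset u ∩ A)

theorem bootSets_subset_union_atLeastNeighbors {r t : ℕ} {A : Finset V}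
    (hsparse : ∀ v, #(G.neighborFinset v ∩ atLeastNeighbors G (r - t) A) < t) (i : ℕ) :
    bootSets G r A i ⊆ A ∪ atLeastNeighbors G (r - t) A := by
  induction i with
  | zero => exact subset_union_left
  | succ i ih =>
    refine union_subset ih fun v hv => ?_
    have hr : r ≤ #(G.neighborFinset v ∩ bootSets G r A i) := (mem_filter.mp hv).2
    have hsplit : #(G.neighborFinset v ∩ bootSets G r A i) ≤
        #(G.neighborFinset v ∩ A) + #(G.neighborFinset v ∩ atLeastNeighbors G (r - t) A) := by
      calc _ ≤ #(G.neighborFinset v ∩ (A ∪ atLeastNeighbors G (r - t) A)) :=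
            card_le_card (inter_subset_inter_left ih)
        _ ≤ _ := by rw [inter_union_distrib_left]; exact card_union_le _ _
    have := hsparse v
    exact mem_union_right _ (mem_filter.mpr ⟨mem_univ _, by omega⟩)

theorem exists_powersetCard_neighborFinset_or_of_percolates {r : ℕ} {A : Finset V}
    (h : percolates G r A) (t : ℕ) (v₀ : V) :
    (∃ v, ∃ S ∈ powersetCard t (G.neighborFinset v), ∀ u ∈ S, r - t ≤ #(G.neighborFinset u ∩ A)) ∨
      v₀ ∈ A ∨ r - t ≤ #(G.neighborFinset v₀ ∩ A) := by
  by_cases hsparse : ∀ v, #(G.neighborFinset v ∩ atLeastNeighbors G (r - t) A) < t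
  · right
    obtain ⟨i, hi⟩ := h
    have := bootSets_subset_union_atLeastNeighbors G hsparse i (hi ▸ mem_univ v₀)
    simpa [atLeastNeighbors] using this
  · left
    simp only [not_forall, not_lt] at hsparse
    obtain ⟨v, hv⟩ := hsparse
    obtain ⟨S, hSsub, hScard⟩ := exists_subset_card_eq hv
    refine ⟨v, S, mem_powersetCard.mpr ⟨hSsub.trans inter_subset_left, hScard⟩, fun u hu => ?_⟩
    exact (mem_filter.mp (inter_subset_right (hSsub hu))).2

theorem sum_card_inter_neighborFinset_comm (S B : Finset V) :
    ∑ x ∈ B, #(S ∩ G.neighborFinset x) = ∑ u ∈ S, #(G.neighborFinset u ∩ B) := by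
  simp only [← filter_mem_eq_inter, card_filter, inter_comm _ B]
  rw [sum_comm]
  simp only [SimpleGraph.mem_neighborFinset, G.adj_comm]

theorem sum_card_inter_neighborFinset_le {D : ℕ} (hdeg : ∀ v, #(G.neighborFinset v) ≤ D)
    (S : Finset V) : ∑ x, #(S ∩ G.neighborFinset x) ≤ #S * D := calc
  ∑ x, #(S ∩ G.neighborFinset x) = ∑ u ∈ S, #(G.neighborFinset u ∩ univ) :=
      sum_card_inter_neighborFinset_comm G S univ
  _ ≤ ∑ _u ∈ S, D := sum_le_sum fun u _ => by simpa using hdeg u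
  _ = #S * D := by rw [sum_const, smul_eq_mul]

theorem card_mul_sub_one_le_sum_card_inter_neighborFinset {k : ℕ} {S A : Finset V}
    (hA : ∀ u ∈ S, k ≤ #(G.neighborFinset u ∩ A)) (v : V) :
    #S * ((k : ℝ) - 1) ≤ ∑ x ∈ A.erase v, (#(S ∩ G.neighborFinset x) : ℝ) := by
  have hlow : ∀ u ∈ S, (k : ℝ) - 1 ≤ #(G.neighborFinset u ∩ A.erase v) := fun u hu => by
    have h1 := pred_card_le_card_erase (s := G.neighborFinset u ∩ A) (a := v)
    rw [← inter_erase] at h1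
    have : k ≤ #(G.neighborFinset u ∩ A.erase v) + 1 := by have := hA u hu; omega
    have : (k : ℝ) ≤ #(G.neighborFinset u ∩ A.erase v) + 1 := by exact_mod_cast this
    linarith
  calc #S * ((k : ℝ) - 1) = ∑ _u ∈ S, ((k : ℝ) - 1) := by rw [sum_const, nsmul_eq_mul]
    _ ≤ ∑ u ∈ S, (#(G.neighborFinset u ∩ A.erase v) : ℝ) := sum_le_sum hlow
    _ = ∑ x ∈ A.erase v, (#(S ∩ G.neighborFinset x) : ℝ) := by
        exact_mod_cast (sum_card_inter_neighborFinset_comm G S (A.erase v)).symm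

theorem probEvent_forall_le_card_inter_le {p θ : ℝ} (hp0 : 0 ≤ p) (hp1 : p ≤ 1) (hθ : 0 ≤ θ)
    {D : ℕ} (hdeg : ∀ v, #(G.neighborFinset v) ≤ D)
    (hcodeg : ∀ v w, v ≠ w → #(G.neighborFinset v ∩ G.neighborFinset w) ≤ 2)
    {v : V} {S : Finset V} (hS : S ⊆ G.neighborFinset v) (k : ℕ) :
    probEvent p (fun A => ∀ u ∈ S, k ≤ #(G.neighborFinset u ∩ A)) ≤
      exp (#S / 2 * (p * D * (exp θ - 1) - θ * (k - 1))) := by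
  -- Each `u ∈ S` has `k - 1` infected neighbours other than `v`; counted from the side of the
  -- infected vertices this is a sum of independent weights `c x ≤ 2` (the codegree bound).
  set c : V → ℕ := fun x => if x = v then 0 else #(S ∩ G.neighborFinset x) with hc
  have hc_le : ∀ x, c x ≤ 2 := fun x => by
    by_cases hx : x = v
    · simp [hc, hx]
    · simp only [hc, hx, if_false]
      exact (card_le_card (inter_subset_inter_right hS)).trans (hcodeg v x (Ne.symm hx))
  have hsum_le : ∑ x, (c x : ℝ) ≤ #S * D := by
    have : ∑ x, c x ≤ #S * D := (sum_le_sum fun x _ => by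
      simp only [hc]; split_ifs <;> simp).trans (sum_card_inter_neighborFinset_le G hdeg S)
    exact_mod_cast this
  have hsum_ge : ∀ A : Finset V, (∀ u ∈ S, k ≤ #(G.neighborFinset u ∩ A)) →
      #S * ((k : ℝ) - 1) ≤ ∑ x ∈ A, (c x : ℝ) := fun A hA => by
    rw [← sum_erase A (by simp [hc] : (c v : ℝ) = 0)]
    refine (card_mul_sub_one_le_sum_card_inter_neighborFinset G hA v).trans_eq ?_
    exact sum_congr rfl fun x hx => by simp [hc, ne_of_mem_erase hx]
  have hexp : ∀ x, exp (θ / 2 * c x) - 1 ≤ c x / 2 * (exp θ - 1) := fun x => by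
    have h2 : (c x : ℝ) ≤ 2 := by exact_mod_cast hc_le x
    rw [show θ / 2 * c x = c x / 2 * θ by ring]
    exact exp_mul_sub_one_le (by positivity) (by linarith) θ
  have hexpθ : 0 ≤ exp θ - 1 := by linarith [one_le_exp hθ]
  calc probEvent p (fun A => ∀ u ∈ S, k ≤ #(G.neighborFinset u ∩ A))
      ≤ exp (p * ∑ x, (exp (θ / 2 * c x) - 1) - θ / 2 * (#S * ((k : ℝ) - 1))) :=
        probEvent_le_exp_of_le_sum hp0 hp1 (by positivity) _ _ hsum_ge
    _ ≤ exp (p * ∑ x, (c x / 2 * (exp θ - 1)) - θ / 2 * (#S * ((k : ℝ) - 1))) := by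
        gcongr with x; exact hexp x
    _ ≤ exp (p * (#S * D / 2 * (exp θ - 1)) - θ / 2 * (#S * ((k : ℝ) - 1))) := by
        rw [← sum_mul, ← sum_div]
        gcongr
    _ = exp (#S / 2 * (p * D * (exp θ - 1) - θ * (k - 1))) := by ring_nf

theorem probEvent_percolates_le_sum {p : ℝ} (hp0 : 0 ≤ p) (hp1 : p ≤ 1) (r t : ℕ) (v₀ : V) :
    probEvent p (percolates G r) ≤
      ∑ v, ∑ S ∈ powersetCard t (G.neighborFinset v),
          probEvent p (fun A => ∀ u ∈ S, r - t ≤ #(G.neighborFinset u ∩ A)) +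
        (p + probEvent p (fun A => r - t ≤ #(G.neighborFinset v₀ ∩ A))) := calc
  probEvent p (percolates G r)
      ≤ probEvent p fun A =>
          (∃ v ∈ univ, ∃ S ∈ powersetCard t (G.neighborFinset v),
            ∀ u ∈ S, r - t ≤ #(G.neighborFinset u ∩ A)) ∨
          (v₀ ∈ A ∨ r - t ≤ #(G.neighborFinset v₀ ∩ A)) :=
        probEvent_mono hp0 hp1 fun A h => by
          simpa using exists_powersetCard_neighborFinset_or_of_percolates G h t v₀
  _ ≤ _ := by
      refine (probEvent_or_le hp0 hp1 _ _).trans (add_le_add ?_ ?_)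
      · exact (probEvent_exists_le_sum hp0 hp1 _ _).trans
          (sum_le_sum fun v _ => probEvent_exists_le_sum hp0 hp1 _ _)
      · simpa only [probEvent_mem] using probEvent_or_le hp0 hp1 (fun A => v₀ ∈ A) _

theorem probEvent_percolates_le [Nonempty V] {p θ : ℝ} (hp0 : 0 ≤ p) (hp1 : p ≤ 1) (hθ : 0 ≤ θ)
    {D : ℕ} (hdeg : ∀ v, #(G.neighborFinset v) ≤ D)
    (hcodeg : ∀ v w, v ≠ w → #(G.neighborFinset v ∩ G.neighborFinset w) ≤ 2) (r t : ℕ) :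
    probEvent p (percolates G r) ≤
      p + exp (p * D * (exp θ - 1) - θ * (r - t : ℕ)) +
        Fintype.card V * 2 ^ D * exp (t / 2 * (p * D * (exp θ - 1) - θ * ((r - t : ℕ) - 1))) := by
  set B := exp (t / 2 * (p * D * (exp θ - 1) - θ * ((r - t : ℕ) - 1)))
  have hstars : ∀ v, ∑ S ∈ powersetCard t (G.neighborFinset v),
      probEvent p (fun A => ∀ u ∈ S, r - t ≤ #(G.neighborFinset u ∩ A)) ≤ 2 ^ D * B := fun v => by
    have hstar : ∀ S ∈ powersetCard t (G.neighborFinset v),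
        probEvent p (fun A => ∀ u ∈ S, r - t ≤ #(G.neighborFinset u ∩ A)) ≤ B := fun S hS => by
      obtain ⟨hSsub, hScard⟩ := mem_powersetCard.1 hS
      simpa [hScard] using
        probEvent_forall_le_card_inter_le G hp0 hp1 hθ hdeg hcodeg hSsub (r - t)
    have hcount : #(powersetCard t (G.neighborFinset v)) ≤ 2 ^ D := by
      rw [card_powersetCard]
      exact (Nat.choose_le_two_pow _ _).trans (Nat.pow_le_pow_right two_pos (hdeg v))
    refine (sum_le_sum hstar).trans ?_
    rw [sum_const, nsmul_eq_mul]
    gcongr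
    exact_mod_cast hcount
  have hcenter : ∀ v₀, probEvent p (fun A => r - t ≤ #(G.neighborFinset v₀ ∩ A)) ≤
      exp (p * D * (exp θ - 1) - θ * (r - t : ℕ)) := fun v₀ => by
    refine (probEvent_le_card_inter_le hp0 hp1 hθ _ _).trans (exp_le_exp.2 ?_)
    have : (#(G.neighborFinset v₀) : ℝ) ≤ D := by exact_mod_cast hdeg v₀
    have : 0 ≤ exp θ - 1 := by linarith [one_le_exp hθ]
    gcongr
  calc probEvent p (percolates G r)
      ≤ ∑ _v : V, 2 ^ D * B + (p + exp (p * D * (exp θ - 1) - θ * (r - t : ℕ))) := by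
        refine (probEvent_percolates_le_sum G hp0 hp1 r t (Classical.arbitrary V)).trans ?_
        gcongr with v
        exacts [hstars v, hcenter _]
    _ = _ := by
        rw [sum_const, card_univ, nsmul_eq_mul]
        ring

end Bootstrap

section Cube

variable {n : ℕ}

theorem cubeGraph_one_adj_iff_hammingDist {x y : Fin n → Bool} :
    (cubeGraph n 1).Adj x y ↔ hammingDist x y = 1 := by
  change 1 ≤ hammingDist x y ∧ hammingDist x y ≤ 1 ↔ _
  omega

theorem cubeGraph_one_adj_iff {x y : Fin n → Bool} :
    (cubeGraph n 1).Adj x y ↔ ∃ i, y = Function.update x i (!x i) := by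
  rw [cubeGraph_one_adj_iff_hammingDist, hammingDist, card_eq_one]
  constructor
  · rintro ⟨i, hi⟩
    have hmem : ∀ j, x j ≠ y j ↔ j = i := fun j => by
      simpa using congrArg (j ∈ ·) hi
    refine ⟨i, funext fun j => ?_⟩
    by_cases hj : j = i
    · subst hj
      have := (hmem j).2 rfl
      cases hx : x j <;> cases hy : y j <;> simp_all
    · have : x j = y j := not_not.1 ((not_congr (hmem j)).2 hj)
      simp [hj, this]
  · rintro ⟨i, rfl⟩
    refine ⟨i, ext fun j => ?_⟩
    by_cases hj : j = i
    · subst hj; simp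
    · simp [Function.update_apply, hj]

theorem card_neighborFinset_cubeGraph_one_le (x : Fin n → Bool) :
    #((cubeGraph n 1).neighborFinset x) ≤ n := by
  have hsub : (cubeGraph n 1).neighborFinset x ⊆ univ.image fun i => Function.update x i (!x i) :=
    fun y hy => by
      obtain ⟨i, rfl⟩ := cubeGraph_one_adj_iff.1 ((SimpleGraph.mem_neighborFinset _ _ _).1 hy)
      exact mem_image_of_mem _ (mem_univ i)
  simpa using (card_le_card hsub).trans card_image_le

-- Distinct vertices with a common neighbour are at Hamming distance at most `2`, and each common
-- neighbour flips one of the coordinates in which they differ.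
theorem card_neighborFinset_inter_cubeGraph_one_le_two {x y : Fin n → Bool} (hxy : x ≠ y) :
    #((cubeGraph n 1).neighborFinset x ∩ (cubeGraph n 1).neighborFinset y) ≤ 2 := by
  rcases eq_empty_or_nonempty ((cubeGraph n 1).neighborFinset x ∩ (cubeGraph n 1).neighborFinset y)
    with h | ⟨u, hu⟩
  · simp [h]
  simp only [mem_inter, SimpleGraph.mem_neighborFinset] at hu
  have hdist : hammingDist x y ≤ 2 := by
    have := hammingDist_triangle x u y
    rw [cubeGraph_one_adj_iff_hammingDist.1 hu.1,
      cubeGraph_one_adj_iff_hammingDist.1 hu.2.symm] at this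
    exact this
  have hsub : (cubeGraph n 1).neighborFinset x ∩ (cubeGraph n 1).neighborFinset y ⊆
      ({i | x i ≠ y i} : Finset (Fin n)).image fun i => Function.update x i (!x i) := fun w hw => by
    simp only [mem_inter, SimpleGraph.mem_neighborFinset] at hw
    obtain ⟨i, rfl⟩ := cubeGraph_one_adj_iff.1 hw.1
    obtain ⟨j, rfl⟩ := cubeGraph_one_adj_iff.1 hw.2.symm
    refine mem_image_of_mem _ (mem_filter.2 ⟨mem_univ _, ?_⟩)
    by_cases hij : j = i
    · subst hij; simp at hxy
    · simp [Function.update_apply, Ne.symm hij]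
  exact (card_le_card hsub).trans (card_image_le.trans hdist)

theorem probEvent_percolates_cubeGraph_le {p θ : ℝ} (hp0 : 0 ≤ p) (hp1 : p ≤ 1) (hθ : 0 ≤ θ)
    (r t : ℕ) :
    probEvent p (percolates (cubeGraph n 1) r) ≤
      p + exp (p * n * (exp θ - 1) - θ * (r - t : ℕ)) +
        4 ^ n * exp (t / 2 * (p * n * (exp θ - 1) - θ * ((r - t : ℕ) - 1))) := by
  have h := probEvent_percolates_le (cubeGraph n 1) hp0 hp1 hθ
    card_neighborFinset_cubeGraph_one_le
    (fun _ _ => card_neighborFinset_inter_cubeGraph_one_le_two) r t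
  rwa [Fintype.card_fun, Fintype.card_bool, Fintype.card_fin, Nat.cast_pow, Nat.cast_ofNat,
    ← mul_pow, show (2 : ℝ) * 2 = 4 by norm_num] at h

end Cube

theorem tendsto_mul_rpow_sub_mul_rpow_atBot (K : ℝ) {C α β : ℝ} (hC : 0 < C) (hα : 0 < α)
    (hαβ : α < β) : Tendsto (fun x : ℝ => K * x ^ α - C * x ^ β) atTop atBot := by
  have hfactor : Tendsto (fun x : ℝ => K - C * x ^ (β - α)) atTop atBot := by
    simpa [sub_eq_add_neg] using tendsto_atBot_add_const_left atTop K
      (tendsto_neg_atTop_atBot.comp ((tendsto_rpow_atTop (sub_pos.2 hαβ)).const_mul_atTop hC))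
  refine ((tendsto_rpow_atTop hα).atTop_mul_atBot₀ hfactor).congr' ?_
  filter_upwards [eventually_gt_atTop 0] with x hx
  rw [mul_sub, mul_left_comm, ← rpow_add hx, add_sub_cancel]
  ring

section Asymptotics

variable {a ε : ℝ} {n : ℕ}

theorem mul_rpow_sub_one_mem_Icc (ha : a ≤ 1) (hε₀ : 0 ≤ ε) (hε₁ : ε ≤ 1) (hn : 1 ≤ n) :
    (1 - ε) * (n : ℝ) ^ (a - 1) ∈ Set.Icc 0 1 := by
  have hn' : (1 : ℝ) ≤ n := by exact_mod_cast hn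
  have h0 : 0 ≤ (n : ℝ) ^ (a - 1) := rpow_nonneg (by linarith) _
  have h1 : (n : ℝ) ^ (a - 1) ≤ 1 := rpow_le_one_of_one_le_of_nonpos hn' (by linarith)
  constructor <;> nlinarith

theorem mul_rpow_sub_mul_cast_ceil_sub_le {L : ℝ} (hL : 0 ≤ L) (hn : 1 ≤ n) :
    ε * (n : ℝ) ^ a - L * ((⌈(n : ℝ) ^ a⌉₊ - ⌈(n : ℝ) ^ (1 / 2 : ℝ)⌉₊ : ℕ) - 1) ≤
      3 * L * (n : ℝ) ^ (1 / 2 : ℝ) - (L - ε) * (n : ℝ) ^ a := by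
  have hn' : (1 : ℝ) ≤ n := by exact_mod_cast hn
  have hs : 1 ≤ (n : ℝ) ^ (1 / 2 : ℝ) := one_le_rpow hn' (by norm_num)
  have hr : (n : ℝ) ^ a ≤ ⌈(n : ℝ) ^ a⌉₊ := Nat.le_ceil _
  have ht : (⌈(n : ℝ) ^ (1 / 2 : ℝ)⌉₊ : ℝ) < (n : ℝ) ^ (1 / 2 : ℝ) + 1 :=
    Nat.ceil_lt_add_one (by linarith)
  have hsub : (⌈(n : ℝ) ^ a⌉₊ : ℝ) ≤
      ((⌈(n : ℝ) ^ a⌉₊ - ⌈(n : ℝ) ^ (1 / 2 : ℝ)⌉₊ : ℕ) : ℝ) + ⌈(n : ℝ) ^ (1 / 2 : ℝ)⌉₊ := by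
    exact_mod_cast le_tsub_add
  nlinarith

theorem probEvent_percolates_cubeGraph_le_exp {L : ℝ} (ha : a ≤ 1) (hε₀ : 0 ≤ ε) (hε₁ : ε ≤ 1)
    (hL : (1 - ε) * exp L = 1) (hn : 1 ≤ n)
    (hY : 3 * L * (n : ℝ) ^ (1 / 2 : ℝ) - (L - ε) * (n : ℝ) ^ a ≤ 0) :
    probEvent ((1 - ε) * (n : ℝ) ^ (a - 1)) (percolates (cubeGraph n 1) ⌈(n : ℝ) ^ a⌉₊) ≤
      (1 - ε) * (n : ℝ) ^ (a - 1) + exp (3 * L * (n : ℝ) ^ (1 / 2 : ℝ) - (L - ε) * (n : ℝ) ^ a) +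
        exp ((log 4 + 3 * L / 2) * (n : ℝ) ^ (1 : ℝ) - (L - ε) / 2 * (n : ℝ) ^ (1 / 2 + a)) := by
  have hn0 : (0 : ℝ) < n := by exact_mod_cast hn
  have hL0 : 0 ≤ L := by
    by_contra h
    nlinarith [exp_pos L, exp_lt_one_iff.2 (not_le.1 h)]
  obtain ⟨hp0, hp1⟩ := mul_rpow_sub_one_mem_Icc ha hε₀ hε₁ hn
  have hmean : (1 - ε) * (n : ℝ) ^ (a - 1) * n * (exp L - 1) = ε * (n : ℝ) ^ a := by
    rw [rpow_sub_one hn0.ne', mul_assoc (1 - ε), div_mul_cancel₀ _ hn0.ne']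
    linear_combination (n : ℝ) ^ a * hL
  refine (probEvent_percolates_cubeGraph_le hp0 hp1 hL0 ⌈(n : ℝ) ^ a⌉₊
    ⌈(n : ℝ) ^ (1 / 2 : ℝ)⌉₊).trans ?_
  rw [hmean, show (4 : ℝ) ^ n = exp (n * log 4) by rw [exp_nat_mul, exp_log (by norm_num)],
    ← exp_add, rpow_add hn0, rpow_one]
  set t := ⌈(n : ℝ) ^ (1 / 2 : ℝ)⌉₊
  set s := (n : ℝ) ^ (1 / 2 : ℝ)
  set R : ℝ := ((⌈(n : ℝ) ^ a⌉₊ - t : ℕ) : ℝ)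
  have hX : ε * (n : ℝ) ^ a - L * (R - 1) ≤ 3 * L * s - (L - ε) * (n : ℝ) ^ a :=
    mul_rpow_sub_mul_cast_ceil_sub_le hL0 hn
  refine add_le_add (add_le_add le_rfl (exp_le_exp.2 (by linarith))) (exp_le_exp.2 ?_)
  have htX : t / 2 * (ε * (n : ℝ) ^ a - L * (R - 1)) ≤
      s / 2 * (3 * L * s - (L - ε) * (n : ℝ) ^ a) := calc
    _ ≤ t / 2 * (3 * L * s - (L - ε) * (n : ℝ) ^ a) := by gcongr
    _ ≤ s / 2 * (3 * L * s - (L - ε) * (n : ℝ) ^ a) :=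
        mul_le_mul_of_nonpos_right (by gcongr; exact Nat.le_ceil _) hY
  have hss : s * s = n := by rw [← rpow_add hn0]; norm_num
  nlinarith

end Asymptotics

/-- For `2/3 < a < 1` and `0 < ε < 1`, with initial infection probability
`p = (1-ε)n^{a-1}`, bootstrap percolation on `Q_n` with threshold `⌈n^a⌉` percolates with
probability tending to `0` as `n → ∞`. -/
theorem perc_prob_tendsto_zero (a : ℝ) (ha₁ : 2 / 3 < a) (ha₂ : a < 1) (ε : ℝ)
    (hε₀ : 0 < ε) (hε₁ : ε < 1) :
    Filter.Tendsto
      (fun n : ℕ =>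
        probEvent ((1 - ε) * (n : ℝ) ^ (a - 1))
          (fun A0 : Finset (Fin n → Bool) => percolates (cubeGraph n 1) ⌈(n : ℝ) ^ a⌉₊ A0))
      Filter.atTop (nhds 0) := by
  -- `L` is the optimal Chernoff parameter, with `(1 - ε) (e^L - 1) = ε`; `L > ε` makes the
  -- exponents negative.
  set L := -log (1 - ε)
  have hL : (1 - ε) * exp L = 1 := by
    rw [exp_neg, exp_log (by linarith), mul_inv_cancel₀ (by linarith)]
  have hεL : ε < L := by
    linarith [log_lt_sub_one_of_pos (by linarith : 0 < 1 - ε) (by linarith : 1 - ε ≠ 1)]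
  have hY := (tendsto_mul_rpow_sub_mul_rpow_atBot (3 * L) (sub_pos.2 hεL) one_half_pos
    (by linarith : 1 / 2 < a)).comp tendsto_natCast_atTop_atTop
  have hZ := (tendsto_mul_rpow_sub_mul_rpow_atBot (log 4 + 3 * L / 2) (half_pos (sub_pos.2 hεL))
    one_pos (by linarith : 1 < 1 / 2 + a)).comp tendsto_natCast_atTop_atTop
  have hp : Tendsto (fun n : ℕ => (1 - ε) * (n : ℝ) ^ (a - 1)) atTop (nhds 0) := by
    simpa using ((tendsto_rpow_neg_atTop (by linarith : 0 < 1 - a)).comp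
      tendsto_natCast_atTop_atTop).const_mul (1 - ε)
  refine squeeze_zero' ?_ ?_ (by simpa only [add_zero] using
    (hp.add (tendsto_exp_atBot.comp hY)).add (tendsto_exp_atBot.comp hZ))
  · filter_upwards [eventually_ge_atTop 1] with n hn
    obtain ⟨hp0, hp1⟩ := mul_rpow_sub_one_mem_Icc ha₂.le hε₀.le hε₁.le hn
    exact probEvent_nonneg hp0 hp1 _
  · filter_upwards [eventually_ge_atTop 1, hY.eventually_le_atBot 0] with n hn hYn
    exact probEvent_percolates_cubeGraph_le_exp ha₂.le hε₀.le hε₁.le hL hn hYn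

end
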